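/- arXiv:0805.4835 — 6 statements merged into one kernel-verified Lean document; each statement's English description precedes it below -/
import Mathlib

section
/- For any group G and elements a, x₁, x₂ ∈ G, there exist elements x̄₁, x̄₂ that are conjugates of x₁ and x₂ respectively, and ε ∈ {1, -1}, such that [x₂, [x₁, a]] = ([[a, x̄₁], x̄₂])^ε. -/
def gcomm {G : Type*} [Group G] (a b : G) : G := a⁻¹ * b⁻¹ * a * b

theorem vine_to_left_vine {G : Type*} [Group G] (a x₁ x₂ : G) :
    ∃ (x₁' x₂' : G) (ε : ℤ), IsConj x₁ x₁' ∧ IsConj x₂ x₂' ∧ (ε = 1 ∨ ε = -1) ∧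
      gcomm x₂ (gcomm x₁ a) = (gcomm (gcomm a x₁') x₂') ^ ε := by
  refine ⟨x₁, (gcomm a x₁) * x₂ * (gcomm a x₁)⁻¹, 1, IsConj.refl _,
    isConj_iff.mpr ⟨gcomm a x₁, rfl⟩, Or.inl rfl, ?_⟩
  simp only [gcomm, zpow_one]
  group
end

section
/- Suppose the leaves of the full binary tree of height n·j + 1 (with j ≥ 1) are colored so that any two leaves whose distance to their closest common ancestor is congruent to 1 modulo j receive different colors. Then at least 2^n colors are used. -/
/-- Distance between two leaves of the full binary tree of height `h`, where leaves are
indexed by binary strings of length `h`: `h` minus the length of the longest common prefix. -/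
noncomputable def leafDist {h : ℕ} (u v : Fin h → Bool) : ℕ :=
  h - sInf {i : ℕ | ∃ hi : i < h, u ⟨i, hi⟩ ≠ v ⟨i, hi⟩}

theorem coloring_lower_bound (n j : ℕ) (hj : 1 ≤ j) {C : Type*}
    (color : (Fin (n * j + 1) → Bool) → C)
    (hcol : ∀ u v, u ≠ v → leafDist u v % j = 1 % j → color u ≠ color v) :
    2 ^ n ≤ Nat.card (Set.range color) := by
  classical
  -- embedding of n-bit strings into leaves
  set emb : (Fin n → Bool) → (Fin (n * j + 1) → Bool) := fun f i =>
    if h : i.val / j < n ∧ i.val % j = 0 then f ⟨i.val / j, h.1⟩ else false with hemb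
  have key : ∀ f g : Fin n → Bool, f ≠ g → color (emb f) ≠ color (emb g) := by
    intro f g hfg
    have hex : ∃ k, ∃ hk : k < n, f ⟨k, hk⟩ ≠ g ⟨k, hk⟩ := by
      by_contra h
      push_neg at h
      apply hfg
      funext k
      exact h k.val k.isLt |>.symm ▸ (by simpa using h k.val k.isLt)
    set m := Nat.find hex with hm
    obtain ⟨hmn, hfgm⟩ := Nat.find_spec hex
    have hmjlt : m * j < n * j + 1 :=
      lt_of_le_of_lt (Nat.mul_le_mul_right j (Nat.le_of_lt hmn))
        (Nat.lt_succ_self _)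
    have hdvd : (m * j) / j = m := Nat.mul_div_cancel m hj
    have hmod : (m * j) % j = 0 := Nat.mul_mod_left m j
    -- emb f and emb g differ at m*j
    have hc : (m * j) / j < n ∧ (m * j) % j = 0 := ⟨by rw [hdvd]; exact hmn, hmod⟩
    have hdiff : emb f ⟨m * j, hmjlt⟩ ≠ emb g ⟨m * j, hmjlt⟩ := by
      simp only [hemb, dif_pos hc]
      simpa [hdvd] using hfgm
    have hne : emb f ≠ emb g := fun h => hdiff (by rw [h])
    -- the set of differing indices
    set D : Set ℕ := {i : ℕ | ∃ hi : i < n * j + 1, emb f ⟨i, hi⟩ ≠ emb g ⟨i, hi⟩} with hD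
    have hmem : m * j ∈ D := ⟨hmjlt, hdiff⟩
    have hlow : ∀ i ∈ D, m * j ≤ i := by
      rintro i ⟨hi, hne'⟩
      by_contra hlt
      push_neg at hlt
      apply hne'
      simp only [hemb]
      by_cases hc : i / j < n ∧ i % j = 0
      · rw [dif_pos hc, dif_pos hc]
        congr 1
        -- i = (i/j)*j with i/j < m
        have hij : i = (i / j) * j := by
          conv_lhs => rw [← Nat.div_add_mod i j, hc.2]
          ring
        have hdivlt : i / j < m := by
          by_contra hge
          push_neg at hge
          have : m * j ≤ (i / j) * j := Nat.mul_le_mul_right j hge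
          omega
        have := Nat.find_min hex hdivlt
        push_neg at this
        exact this hc.1
      · rw [dif_neg hc, dif_neg hc]
    have hinf : sInf D = m * j :=
      le_antisymm (Nat.sInf_le hmem) (hlow _ (Nat.sInf_mem ⟨_, hmem⟩))
    have hdist : leafDist (emb f) (emb g) = (n - m) * j + 1 := by
      unfold leafDist
      rw [← hD, hinf]
      have : m * j ≤ n * j := Nat.mul_le_mul_right j (Nat.le_of_lt hmn)
      have : (n - m) * j = n * j - m * j := Nat.sub_mul n m j
      omega
    have hdistmod : leafDist (emb f) (emb g) % j = 1 % j := by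
      rw [hdist, Nat.add_comm, Nat.add_mul_mod_self_right]
    exact hcol _ _ hne hdistmod
  -- conclude
  have hinj : Function.Injective
      (fun f : Fin n → Bool => (⟨color (emb f), Set.mem_range_self _⟩ : Set.range color)) := by
    intro f g h
    by_contra hfg
    exact key f g hfg (congrArg Subtype.val h)
  have hfin : Finite (Set.range color) := Set.finite_range color
  calc 2 ^ n = Nat.card (Fin n → Bool) := by simp [Nat.card_fun]
    _ ≤ Nat.card (Set.range color) := Nat.card_le_card_of_injective _ hinj
end

section
/- Leaves of the full binary tree of height h can be indexed by binary strings of length h; define the distance between two distinct leaves as h minus the length of their longest common prefix. If 2^n > k and leaves of the full binary tree of height n·j + 1 are colored with k colors, then there exist two leaves with the same color whose distance is congruent to 1 modulo j. -/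
theorem monochromatic_pair_exists (n j k : ℕ) (hn : 1 ≤ n) (hj : 1 ≤ j) (hk : 1 ≤ k)
    (hcard : k < 2 ^ n) (color : (Fin (n * j + 1) → Bool) → Fin k) :
    ∃ u v, u ≠ v ∧ color u = color v ∧ leafDist u v % j = 1 % j := by
  have hj0 : 0 < j := hj
  -- the embedding: repeat each of the n bits j times, then a final `false`
  let f : (Fin n → Bool) → (Fin (n * j + 1) → Bool) := fun b i =>
    if hi : (i : ℕ) < n * j then
      b ⟨(i : ℕ) / j, Nat.div_lt_of_lt_mul (Nat.mul_comm n j ▸ hi)⟩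
    else false
  -- pigeonhole
  obtain ⟨a, b, hab, hcol⟩ : ∃ a b, a ≠ b ∧ color (f a) = color (f b) := by
    have hlt : Fintype.card (Fin k) < Fintype.card (Fin n → Bool) := by
      simpa [Fintype.card_fun] using hcard
    obtain ⟨a, b, hab, h⟩ := Fintype.exists_ne_map_eq_of_card_lt (fun x => color (f x)) hlt
    exact ⟨a, b, hab, h⟩
  refine ⟨f a, f b, ?_, hcol, ?_⟩
  · -- f a ≠ f b
    obtain ⟨t, ht⟩ : ∃ t, a t ≠ b t := by
      by_contra hcon
      push_neg at hcon
      exact hab (funext hcon)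
    intro hfeq
    have htj : j * (t : ℕ) < n * j := by
      have := t.isLt
      calc j * (t : ℕ) < j * n := (Nat.mul_lt_mul_left hj0).mpr this
        _ = n * j := Nat.mul_comm _ _
    have := congrFun hfeq ⟨j * (t : ℕ), by omega⟩
    simp only [f, dif_pos htj] at this
    have hdiv : j * (t : ℕ) / j = (t : ℕ) := Nat.mul_div_cancel_left _ hj0
    apply ht
    have ha := this
    simpa [Fin.ext_iff, hdiv] using ha
  · -- distance computation
    set S : Set ℕ := {i : ℕ | ∃ hi : i < n * j + 1, f a ⟨i, hi⟩ ≠ f b ⟨i, hi⟩} with hS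
    have hne : S.Nonempty := by
      obtain ⟨t, ht⟩ : ∃ t, a t ≠ b t := by
        by_contra hcon
        push_neg at hcon
        exact hab (funext hcon)
      have htj : j * (t : ℕ) < n * j := by
        have := t.isLt
        calc j * (t : ℕ) < j * n := (Nat.mul_lt_mul_left hj0).mpr this
          _ = n * j := Nat.mul_comm _ _
      refine ⟨j * (t : ℕ), by omega, ?_⟩
      simp only [f, dif_pos htj]
      have hdiv : j * (t : ℕ) / j = (t : ℕ) := Nat.mul_div_cancel_left _ hj0
      simpa [Fin.ext_iff, hdiv] using ht
    set i0 := sInf S with hi0def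
    have hi0 : i0 ∈ S := Nat.sInf_mem hne
    obtain ⟨hi0lt, hi0ne⟩ := hi0
    -- i0 < n * j
    have hi0lt' : i0 < n * j := by
      rcases Nat.lt_or_ge i0 (n * j) with h | h
      · exact h
      · exfalso
        have : ¬ i0 < n * j := Nat.not_lt.mpr h
        simp only [f, dif_neg this] at hi0ne
        exact hi0ne rfl
    -- j divides i0
    have hdvd : j ∣ i0 := by
      set i' := j * (i0 / j) with hi'def
      have hle : i' ≤ i0 := by
        have := Nat.div_mul_le_self i0 j
        calc i' = i0 / j * j := Nat.mul_comm _ _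
          _ ≤ i0 := this
      have hi'lt : i' < n * j := lt_of_le_of_lt hle hi0lt'
      have hi'div : i' / j = i0 / j := Nat.mul_div_cancel_left _ hj0
      have hi'S : i' ∈ S := by
        refine ⟨by omega, ?_⟩
        simp only [f, dif_pos hi'lt]
        simp only [f, dif_pos hi0lt'] at hi0ne
        simpa [Fin.ext_iff, hi'div] using hi0ne
      have : i0 ≤ i' := Nat.sInf_le hi'S
      have heq : i0 = i' := le_antisymm this hle
      exact ⟨i0 / j, heq⟩
    obtain ⟨m, hm⟩ := hdvd
    have hmn : m < n := by
      by_contra hcon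
      push_neg at hcon
      have : n * j ≤ j * m := by
        calc n * j = j * n := Nat.mul_comm _ _
          _ ≤ j * m := Nat.mul_le_mul_left j hcon
      omega
    have hdist : leafDist (f a) (f b) = (n - m) * j + 1 := by
      unfold leafDist
      have : sInf {i : ℕ | ∃ hi : i < n * j + 1, f a ⟨i, hi⟩ ≠ f b ⟨i, hi⟩} = i0 := rfl
      rw [this, hm]
      have h1 : j * m ≤ n * j := by omega
      have h2 : (n - m) * j = n * j - m * j := Nat.sub_mul n m j
      have h3 : m * j ≤ n * j := Nat.mul_le_mul_right j (le_of_lt hmn)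
      have h4 : j * m = m * j := Nat.mul_comm j m
      omega
    rw [hdist]
    rw [Nat.add_comm]
    exact Nat.add_mul_mod_self_right 1 (n - m) j
end

section
/- Let G be a group and define B_p(G) recursively by B_0(G) = G and B_{p+1}(G) = { [x,y] : x, y ∈ B_p(G) }. Then B_p(G) generates the p-th derived subgroup G^{(p)}. -/
def Bset (G : Type*) [Group G] : ℕ → Set G
  | 0 => Set.univ
  | p + 1 => {z | ∃ x ∈ Bset G p, ∃ y ∈ Bset G p, z = gcomm x y}

/-!
Each `Bset G p` is closed under inversion and conjugation, so the subgroup it generates is normal.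
By induction, `⟨B_{p+1}⟩ ≤ ⁅⟨B_p⟩, ⟨B_p⟩⁆ = G^{(p+1)}` is clear, and conversely modulo the normal
subgroup `⟨B_{p+1}⟩` the generators of `⟨B_p⟩` commute pairwise, hence so does all of `⟨B_p⟩`.
-/

open scoped commutatorElement

namespace Subgroup

variable {G : Type*} [Group G]

theorem commutator_closure_le_of_forall_mem {S T : Set G} {N : Subgroup G} [N.Normal]
    (h : ∀ s ∈ S, ∀ t ∈ T, ⁅s, t⁆ ∈ N) : ⁅closure S, closure T⁆ ≤ N := by
  rw [← QuotientGroup.ker_mk' N, ← map_eq_bot_iff, map_commutator, MonoidHom.map_closure,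
    MonoidHom.map_closure, commutator_eq_bot_iff_le_centralizer, centralizer_closure, closure_le]
  rintro _ ⟨s, hs, rfl⟩
  rw [SetLike.mem_coe, mem_centralizer_iff]
  rintro _ ⟨t, ht, rfl⟩
  have hst : QuotientGroup.mk' N ⁅s, t⁆ = 1 := (QuotientGroup.eq_one_iff _).mpr (h s hs t ht)
  rw [map_commutatorElement, commutatorElement_eq_one_iff_mul_comm] at hst
  exact hst.symm

end Subgroup

section Bset

variable {G : Type*} [Group G]

theorem gcomm_eq_commutatorElement (a b : G) : gcomm a b = ⁅a⁻¹, b⁻¹⁆ := by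
  simp [gcomm, commutatorElement_def]

theorem inv_mem_Bset {p : ℕ} {x : G} (hx : x ∈ Bset G p) : x⁻¹ ∈ Bset G p := by
  cases p with
  | zero => trivial
  | succ q =>
    obtain ⟨a, ha, b, hb, rfl⟩ := hx
    exact ⟨b, hb, a, ha, by simp only [gcomm]; group⟩

theorem conj_mem_Bset {p : ℕ} {x : G} (g : G) (hx : x ∈ Bset G p) : g * x * g⁻¹ ∈ Bset G p := by
  induction p generalizing x with
  | zero => trivial
  | succ q ih =>
    obtain ⟨a, ha, b, hb, rfl⟩ := hx
    exact ⟨g * a * g⁻¹, ih ha, g * b * g⁻¹, ih hb, by simp only [gcomm]; group⟩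

theorem commutatorElement_mem_Bset_succ {p : ℕ} {x y : G} (hx : x ∈ Bset G p)
    (hy : y ∈ Bset G p) : ⁅x, y⁆ ∈ Bset G (p + 1) :=
  ⟨x⁻¹, inv_mem_Bset hx, y⁻¹, inv_mem_Bset hy, by rw [gcomm_eq_commutatorElement, inv_inv, inv_inv]⟩

theorem closure_Bset_normal (p : ℕ) : (Subgroup.closure (Bset G p)).Normal :=
  Subgroup.normalizer_eq_top_iff.mp <| top_le_iff.mp <| Subgroup.le_normalizer_closure_iff.mpr
    fun g _ _ hx => Subgroup.subset_closure (conj_mem_Bset g hx)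

theorem closure_Bset_succ (p : ℕ) :
    Subgroup.closure (Bset G (p + 1)) =
      ⁅Subgroup.closure (Bset G p), Subgroup.closure (Bset G p)⁆ := by
  apply le_antisymm
  · rw [Subgroup.closure_le]
    rintro _ ⟨x, hx, y, hy, rfl⟩
    rw [gcomm_eq_commutatorElement]
    exact Subgroup.commutator_mem_commutator
      (Subgroup.subset_closure (inv_mem_Bset hx)) (Subgroup.subset_closure (inv_mem_Bset hy))
  · have := closure_Bset_normal (G := G) (p + 1)
    exact Subgroup.commutator_closure_le_of_forall_mem fun x hx y hy =>
      Subgroup.subset_closure (commutatorElement_mem_Bset_succ hx hy)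

end Bset

theorem Bset_generates_derived (G : Type*) [Group G] (p : ℕ) :
    Subgroup.closure (Bset G p) = derivedSeries G p := by
  induction p with
  | zero => simp [Bset]
  | succ q ih => rw [closure_Bset_succ, ih, derivedSeries_succ]
end

section
/- If a group G satisfies [[x,y],z] = [x,[y,z]] for all x, y, z ∈ G, then for any commuting elements a, b ∈ G, b commutes with [a,u] for all u ∈ G. -/
theorem assoc_law_commuting_centralize {G : Type*} [Group G]
    (hassoc : ∀ x y z : G, gcomm (gcomm x y) z = gcomm x (gcomm y z)) :
    ∀ a b : G, a * b = b * a → ∀ u : G, b * gcomm a u = gcomm a u * b := by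
  intro a b h u
  have hba : gcomm b a = 1 := by
    simp only [gcomm]
    rw [mul_assoc, mul_assoc, ← h]
    group
  have h1 := hassoc b a u
  rw [hba] at h1
  simp only [gcomm, inv_one, one_mul, mul_one] at h1
  -- h1 : u⁻¹ * u = b⁻¹ * (a⁻¹*u⁻¹*a*u)⁻¹ * b * (a⁻¹*u⁻¹*a*u)
  have h2 : (1 : G) = b⁻¹ * (a⁻¹ * u⁻¹ * a * u)⁻¹ * b * (a⁻¹ * u⁻¹ * a * u) := by
    rw [← h1]; group
  have h3 : (a⁻¹ * u⁻¹ * a * u) * b = b * (a⁻¹ * u⁻¹ * a * u) := by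
    have := congrArg (fun x => (a⁻¹ * u⁻¹ * a * u) * b * x) h2
    simp at this
    calc (a⁻¹ * u⁻¹ * a * u) * b
        = (a⁻¹ * u⁻¹ * a * u) * b * (b⁻¹ * (a⁻¹ * u⁻¹ * a * u)⁻¹ * b * (a⁻¹ * u⁻¹ * a * u)) := by rw [← h2]; group
      _ = b * (a⁻¹ * u⁻¹ * a * u) := by group
  simp only [gcomm]
  exact h3.symm
end

section
/- If a finite group G satisfies the identity [[x,y],z] = [x,[y,z]] for all x, y, z ∈ G (associativity of the commutator operation), then G is solvable. -/
open scoped commutatorElement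

section gcomm

variable {G : Type*} [Group G]

theorem gcomm_eq_one_iff {a b : G} : gcomm a b = 1 ↔ Commute a b := by
  rw [gcomm_eq_commutatorElement, commutatorElement_eq_one_iff_commute, Commute.inv_inv_iff]

@[simp]
theorem gcomm_self (a : G) : gcomm a a = 1 := by
  simp [gcomm]

@[simp]
theorem gcomm_one_right (a : G) : gcomm a 1 = 1 := by
  simp [gcomm]

@[simp]
theorem inv_gcomm (a b : G) : (gcomm a b)⁻¹ = gcomm b a := by
  simp [gcomm, mul_assoc]

theorem gcomm_inv_right_of_commute {a b : G} (h : Commute (gcomm a b) b) :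
    gcomm a b⁻¹ = (gcomm a b)⁻¹ := by
  calc gcomm a b⁻¹ = b * (gcomm a b)⁻¹ * b⁻¹ := by simp only [gcomm]; group
    _ = (gcomm a b)⁻¹ := by rw [← h.inv_left.eq, mul_inv_cancel_right]

theorem gcomm_hall_witt (x y z : G) :
    (y⁻¹ * gcomm (gcomm x y⁻¹) z * y) * (z⁻¹ * gcomm (gcomm y z⁻¹) x * z) *
      (x⁻¹ * gcomm (gcomm z x⁻¹) y * x) = 1 := by
  simp only [gcomm]; group

end gcomm

def CommutatorAssociative (G : Type*) [Group G] : Prop :=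
  ∀ x y z : G, gcomm (gcomm x y) z = gcomm x (gcomm y z)

namespace CommutatorAssociative

variable {G : Type*} [Group G]

theorem commute_gcomm_right (h : CommutatorAssociative G) (a b : G) : Commute (gcomm a b) b :=
  gcomm_eq_one_iff.mp (by rw [h, gcomm_self, gcomm_one_right])

theorem gcomm_gcomm_eq_inv (h : CommutatorAssociative G) (x y z : G) :
    gcomm (gcomm x y) z = (gcomm (gcomm z x) y)⁻¹ := by
  rw [h z x y, inv_gcomm]

theorem gcomm_gcomm_cycle (h : CommutatorAssociative G) (x y z : G) :
    gcomm (gcomm x y) z = gcomm (gcomm y z) x := by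
  rw [h.gcomm_gcomm_eq_inv x y z, h.gcomm_gcomm_eq_inv z x y, inv_inv]

theorem inv_gcomm_gcomm (h : CommutatorAssociative G) (x y z : G) :
    (gcomm (gcomm x y) z)⁻¹ = gcomm (gcomm x y) z := by
  conv_rhs => rw [h.gcomm_gcomm_eq_inv x y z, h.gcomm_gcomm_cycle z x y]

theorem commute_gcomm_gcomm_middle (h : CommutatorAssociative G) (x y z : G) :
    Commute (gcomm (gcomm x y) z) y := by
  rw [h.gcomm_gcomm_cycle, h.gcomm_gcomm_cycle]
  exact h.commute_gcomm_right (gcomm z x) y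

theorem gcomm_gcomm_inv_middle (h : CommutatorAssociative G) (x y z : G) :
    gcomm (gcomm x y⁻¹) z = gcomm (gcomm x y) z := by
  rw [← h.gcomm_gcomm_cycle z x y⁻¹, gcomm_inv_right_of_commute (h.commute_gcomm_right _ y),
    h.inv_gcomm_gcomm, h.gcomm_gcomm_cycle]

theorem conj_gcomm_gcomm_inv_middle (h : CommutatorAssociative G) (x y z : G) :
    y⁻¹ * gcomm (gcomm x y⁻¹) z * y = gcomm (gcomm x y) z := by
  have hy : Commute (gcomm (gcomm x y⁻¹) z) y := by
    simpa using (h.commute_gcomm_gcomm_middle x y⁻¹ z).inv_right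
  rw [mul_assoc, hy.eq, inv_mul_cancel_left, h.gcomm_gcomm_inv_middle]

theorem gcomm_gcomm_eq_one (h : CommutatorAssociative G) (x y z : G) :
    gcomm (gcomm x y) z = 1 := by
  have hall_witt := gcomm_hall_witt x y z
  rw [h.conj_gcomm_gcomm_inv_middle, h.conj_gcomm_gcomm_inv_middle,
    h.conj_gcomm_gcomm_inv_middle, ← h.gcomm_gcomm_cycle x y z, h.gcomm_gcomm_cycle z x y,
    mul_eq_one_iff_eq_inv.mpr (h.inv_gcomm_gcomm x y z).symm, one_mul] at hall_witt
  exact hall_witt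

theorem commutatorElement_commutatorElement_eq_one (h : CommutatorAssociative G) (x y z : G) :
    ⁅⁅x, y⁆, z⁆ = 1 := by
  have hw := h.gcomm_gcomm_eq_one y⁻¹ x⁻¹ z⁻¹
  rwa [gcomm_eq_commutatorElement, gcomm_eq_commutatorElement, inv_inv, inv_inv, inv_inv,
    commutatorElement_inv] at hw

theorem isNilpotent (h : CommutatorAssociative G) : Group.IsNilpotent G :=
  ⟨2, (Subgroup.eq_top_iff' _).mpr fun x y z =>
    Subgroup.mem_bot.mpr (h.commutatorElement_commutatorElement_eq_one x y z)⟩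

end CommutatorAssociative

theorem assoc_commutator_implies_solvable_general {G : Type*} [Group G]
    (hassoc : ∀ x y z : G, gcomm (gcomm x y) z = gcomm x (gcomm y z)) :
    IsSolvable G :=
  haveI := CommutatorAssociative.isNilpotent hassoc
  show Group.IsSolvable G from inferInstance

theorem assoc_commutator_implies_solvable {G : Type*} [Group G] [Finite G]
    (hassoc : ∀ x y z : G, gcomm (gcomm x y) z = gcomm x (gcomm y z)) :
    IsSolvable G :=
  assoc_commutator_implies_solvable_general hassoc
end
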